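/- For every integer i ≥ 0, the quotient h(z,q,−q^{i+2})/h(z,q,−q) equals Σ_{k≥0} (−1)^k q^{k(k+1)/2} · [k+i choose k]_q · z^k, where [m choose k]_q is the Gaussian binomial coefficient. -/

import Mathlib

noncomputable section
open PowerSeries Finset

/-- The field `ℚ(q)` of rational functions in one indeterminate `q`. -/
abbrev K : Type := RatFunc ℚ

/-- The indeterminate `q`. -/
def q : K := RatFunc.X

/-- The coefficient `h_k(a,b) = (−1)^k q^{k(k−1)/2} ∏_{j=0}^{k−1}(a+q^j b) / ∏_{j=1}^{k}(1−q^j)`. -/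
def hk (a b : K) (k : ℕ) : K :=
  (-1) ^ k * q ^ (k.choose 2) * (∏ j ∈ range k, (a + q ^ j * b)) /
    (∏ j ∈ range k, (1 - q ^ (j + 1)))

/-- The series `h(z,a,b) = Σ_k h_k(a,b) z^k`. -/
def hser (a b : K) : PowerSeries K := PowerSeries.mk (hk a b)
/-- The Gaussian binomial coefficient `[m choose k]_q = (q;q)_m / ((q;q)_k (q;q)_{m−k})`. -/
def gb (m k : ℕ) : K :=
  (∏ j ∈ range m, (1 - q ^ (j + 1))) /
    ((∏ j ∈ range k, (1 - q ^ (j + 1))) * ∏ j ∈ range (m - k), (1 - q ^ (j + 1)))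


/-! The factor `j = 0` of `∏ (q + q^j b)` vanishes at `b = -q`, so `h(z,q,-q) = 1`. At
`b = -q^{i+2}` the factors are `q (1 - q^{i+j+1})`, so the `k`-th coefficient is
`(-1)^k q^{k(k-1)/2 + k} (q^{i+1};q)_k / (q;q)_k`, and `(q^{i+1};q)_k = (q;q)_{k+i} / (q;q)_i`. -/

theorem RatFunc.X_pow_succ_ne_one {F : Type*} [Field F] (n : ℕ) :
    (RatFunc.X : RatFunc F) ^ (n + 1) ≠ 1 := by
  rw [← RatFunc.algebraMap_X, ← map_pow, ← map_one (algebraMap (Polynomial F) (RatFunc F)),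
    (RatFunc.algebraMap_injective F).ne_iff]
  intro h
  simpa using congrArg Polynomial.natDegree h

theorem Nat.choose_two_add_self (k : ℕ) : k.choose 2 + k = k * (k + 1) / 2 := by
  rw [Nat.choose_two_right, ← Nat.triangle_succ, Nat.add_sub_cancel, mul_comm]

/-- `(q;q)_n`. -/
def qPoch (n : ℕ) : K := ∏ j ∈ range n, (1 - q ^ (j + 1))

theorem qPoch_ne_zero (n : ℕ) : qPoch n ≠ 0 :=
  prod_ne_zero_iff.2 fun j _ h => RatFunc.X_pow_succ_ne_one j (sub_eq_zero.1 h).symm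

theorem qPoch_add (i k : ℕ) :
    qPoch (i + k) = qPoch i * ∏ j ∈ range k, (1 - q ^ (i + j + 1)) :=
  prod_range_add _ i k

theorem gb_add_self_left (k i : ℕ) :
    gb (k + i) k = (∏ j ∈ range k, (1 - q ^ (i + j + 1))) / qPoch k := by
  have hgb : gb (k + i) k = qPoch (i + k) / (qPoch k * qPoch i) := by
    rw [gb, Nat.add_sub_cancel_left, add_comm]; rfl
  rw [hgb, qPoch_add, div_eq_div_iff (mul_ne_zero (qPoch_ne_zero k) (qPoch_ne_zero i))
    (qPoch_ne_zero k)]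
  ring

theorem hser_neg_self : hser q (-q) = 1 := by
  ext (_ | k)
  · simp [hser, hk]
  · rw [hser, coeff_mk, hk, coeff_one, prod_range_succ', if_neg k.succ_ne_zero]
    simp

theorem hk_neg_pow (i k : ℕ) :
    hk q (-q ^ (i + 2)) k = (-1) ^ k * q ^ (k * (k + 1) / 2) * gb (k + i) k := by
  have hfactor : ∀ j, q + q ^ j * -q ^ (i + 2) = q * (1 - q ^ (i + j + 1)) := fun j => by ring
  rw [hk, gb_add_self_left, ← Nat.choose_two_add_self, pow_add q _ k, qPoch]
  simp only [hfactor, prod_mul_distrib, prod_const, card_range]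
  ring

/-- Prodinger's formula (3.7): for every `i ≥ 0`,
`h(z,q,−q^{i+2})/h(z,q,−q) = Σ_k (−1)^k q^{k(k+1)/2} [k+i choose k]_q z^k`. -/
theorem prodinger_formula (i : ℕ) :
    hser q (-q ^ (i + 2)) * (hser q (-q))⁻¹ =
      PowerSeries.mk (fun k => (-1) ^ k * q ^ (k * (k + 1) / 2) * gb (k + i) k) := by
  rw [hser_neg_self, inv_one, mul_one, hser]
  exact congrArg PowerSeries.mk (funext (hk_neg_pow i))

end
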